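/- For all m ≥ 1 and n ≥ 1, sum_{j=0}^{m} (-1)^{m+j} t(m,j) G_{2n+2j} = m! · sum_{j=0}^{n} (-1)^{n+j} T(n,j) j! (j+m-1)!, where t and T are the central factorial numbers of the first and second kind respectively. -/
import Mathlib


/-- Gandhi polynomials: `F 1 = 1`, `F_{n+1}(z) = (z+1)^2 F_n(z+1) - z^2 F_n(z)`. -/
def gandhiF : ℕ → ℚ → ℚ
  | 0, _ => 1
  | 1, _ => 1
  | n + 2, z => (z + 1) ^ 2 * gandhiF (n + 1) (z + 1) - z ^ 2 * gandhiF (n + 1) z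

/-- Genocchi numbers of the first kind: `genocchi n = G_{2n} = F_n(0)`. -/
def genocchi (n : ℕ) : ℚ := gandhiF n 0

/-- Central factorial numbers of the first kind. -/
def centralt : ℕ → ℕ → ℚ
  | 0, 0 => 1
  | 0, _ + 1 => 0
  | _ + 1, 0 => 0
  | n + 1, j + 1 => centralt n j - (n : ℚ) ^ 2 * centralt n (j + 1)

/-- Central factorial numbers of the second kind. -/
def centralT : ℕ → ℕ → ℚ
  | 0, 0 => 1
  | 0, _ + 1 => 0
  | _ + 1, 0 => 0
  | n + 1, j + 1 => centralT n j + ((j : ℚ) + 1) ^ 2 * centralT n (j + 1)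

lemma centralt_succ_zero (n : ℕ) : centralt (n+1) 0 = 0 := rfl
lemma centralT_succ_zero (n : ℕ) : centralT (n+1) 0 = 0 := rfl
lemma centralt_succ_succ (n j : ℕ) :
    centralt (n+1) (j+1) = centralt n j - (n:ℚ)^2 * centralt n (j+1) := rfl
lemma centralT_succ_succ (n j : ℕ) :
    centralT (n+1) (j+1) = centralT n j + ((j:ℚ)+1)^2 * centralT n (j+1) := rfl

lemma centralt_eq_zero : ∀ m j, m < j → centralt m j = 0 := by
  intro m
  induction m with
  | zero => intro j hj; obtain ⟨k, rfl⟩ := Nat.exists_eq_add_of_lt hj; rfl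
  | succ n ih =>
    intro j hj
    obtain ⟨k, rfl⟩ : ∃ k, j = k + 1 := ⟨j - 1, by omega⟩
    rw [centralt_succ_succ, ih _ (by omega), ih _ (by omega)]
    ring

lemma centralT_eq_zero : ∀ m j, m < j → centralT m j = 0 := by
  intro m
  induction m with
  | zero => intro j hj; obtain ⟨k, rfl⟩ := Nat.exists_eq_add_of_lt hj; rfl
  | succ n ih =>
    intro j hj
    obtain ⟨k, rfl⟩ : ∃ k, j = k + 1 := ⟨j - 1, by omega⟩
    rw [centralT_succ_succ, ih _ (by omega), ih _ (by omega)]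
    ring

lemma gandhiF_succ (n : ℕ) (hn : 1 ≤ n) (z : ℚ) :
    gandhiF (n+1) z = (z+1)^2 * gandhiF n (z+1) - z^2 * gandhiF n z := by
  obtain ⟨k, rfl⟩ : ∃ k, n = k + 1 := ⟨n - 1, by omega⟩
  rfl

lemma genocchi_succ (j : ℕ) : genocchi (j+1) = gandhiF j 1 := by
  cases j with
  | zero => rfl
  | succ k =>
    show gandhiF (k+2) 0 = gandhiF (k+1) 1
    rw [gandhiF]
    norm_num

lemma centralt_zero_of_pos (n : ℕ) (hn : 1 ≤ n) : centralt n 0 = 0 := by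
  obtain ⟨k, rfl⟩ : ∃ k, n = k + 1 := ⟨n - 1, by omega⟩
  rfl

open Finset

lemma Hsum : ∀ m, 1 ≤ m → ∀ x : ℚ,
    ∑ j ∈ range (m+1), (-1:ℚ)^(m+j) * centralt m j * gandhiF j x
      = (m.factorial : ℚ) * ∏ i ∈ range (m-1), (x + i + 1) := by
  intro m hm
  induction m, hm using Nat.le_induction with
  | base =>
    intro x
    simp [Finset.sum_range_succ, centralt, gandhiF, Nat.factorial]
  | succ k hk ih =>
    intro x
    have key : ∑ j ∈ range (k+1+1), (-1:ℚ)^(k+1+j) * centralt (k+1) j * gandhiF j x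
        = (∑ i ∈ range (k+1), (-1:ℚ)^(k+i) * centralt k i * gandhiF (i+1) x)
          - (k:ℚ)^2 * ∑ i ∈ range (k+1), (-1:ℚ)^(k+i) * centralt k (i+1) * gandhiF (i+1) x := by
      rw [Finset.sum_range_succ', centralt_succ_zero, Finset.mul_sum,
        ← Finset.sum_sub_distrib]
      simp only [mul_zero, zero_mul, add_zero]
      refine Finset.sum_congr rfl fun i _ => ?_
      rw [centralt_succ_succ]
      have hp : ((-1:ℚ))^(k+1+(i+1)) = (-1)^(k+i) := by
        rw [show k+1+(i+1) = (k+i)+2 by ring, pow_add]; norm_num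
      rw [hp]; ring
    have hB : ∑ i ∈ range (k+1), (-1:ℚ)^(k+i) * centralt k (i+1) * gandhiF (i+1) x
        = - ∑ j ∈ range (k+1), (-1:ℚ)^(k+j) * centralt k j * gandhiF j x := by
      have h0 : ∑ j ∈ range (k+1+1), (-1:ℚ)^(k+j) * centralt k j * gandhiF j x
          = (∑ i ∈ range (k+1), (-1:ℚ)^(k+(i+1)) * centralt k (i+1) * gandhiF (i+1) x)
            + (-1:ℚ)^(k+0) * centralt k 0 * gandhiF 0 x := Finset.sum_range_succ' _ _
      rw [Finset.sum_range_succ, centralt_eq_zero k (k+1) (by omega),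
        centralt_zero_of_pos k hk] at h0
      simp only [mul_zero, zero_mul, add_zero, mul_zero] at h0
      have : ∀ i, (-1:ℚ)^(k+(i+1)) * centralt k (i+1) * gandhiF (i+1) x
          = -((-1:ℚ)^(k+i) * centralt k (i+1) * gandhiF (i+1) x) := by
        intro i
        rw [show k+(i+1) = (k+i)+1 by ring, pow_succ]; ring
      simp only [this, Finset.sum_neg_distrib] at h0
      linarith [h0]
    have hA : ∑ i ∈ range (k+1), (-1:ℚ)^(k+i) * centralt k i * gandhiF (i+1) x
        = (x+1)^2 * (∑ j ∈ range (k+1), (-1:ℚ)^(k+j) * centralt k j * gandhiF j (x+1))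
          - x^2 * ∑ j ∈ range (k+1), (-1:ℚ)^(k+j) * centralt k j * gandhiF j x := by
      rw [Finset.mul_sum, Finset.mul_sum, ← Finset.sum_sub_distrib]
      refine Finset.sum_congr rfl fun i _ => ?_
      rcases Nat.eq_zero_or_pos i with rfl | hi
      · rw [centralt_zero_of_pos k hk]; ring
      · rw [gandhiF_succ i hi]; ring
    rw [key, hA, hB, ih (x+1), ih x]
    obtain ⟨l, rfl⟩ : ∃ l, k = l + 1 := ⟨k-1, by omega⟩
    simp only [Nat.add_sub_cancel]
    have h1 : ∏ i ∈ range (l+1), (x + i + 1)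
        = (∏ i ∈ range l, (x + i + 2)) * (x + 1) := by
      rw [Finset.prod_range_succ']
      have hc : ∀ i ∈ range l, (x + ((i+1:ℕ):ℚ) + 1) = x + i + 2 := fun i _ => by
        push_cast; ring
      rw [Finset.prod_congr rfl hc]
      norm_num
    have h2 : ∏ i ∈ range (l+1), (x + i + 1)
        = (∏ i ∈ range l, (x + i + 1)) * (x + l + 1) := by
      rw [Finset.prod_range_succ]
    have h3 : ∏ i ∈ range l, ((x+1) + i + 1) = ∏ i ∈ range l, (x + i + 2) := by
      refine Finset.prod_congr rfl fun i _ => by ring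
    have h4 : (∏ i ∈ range l, (x + i + 2)) * (x + 1)
        = (∏ i ∈ range l, (x + i + 1)) * (x + l + 1) := h1.symm.trans h2
    rw [h3, h2]
    rw [Nat.factorial_succ (l+1)]
    push_cast
    linear_combination (x+1) * ((l+1).factorial : ℚ) * h4

lemma neg_one_pow_shift2 (a b : ℕ) : ((-1:ℚ))^(a+1+(b+1)) = (-1)^(a+b) := by
  rw [show a+1+(b+1) = (a+b)+2 by ring, pow_add]; norm_num

lemma neg_one_pow_shift1 (a b : ℕ) : ((-1:ℚ))^(a+(b+1)) = -(-1:ℚ)^(a+b) := by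
  rw [show a+(b+1) = (a+b)+1 by ring, pow_succ]; ring

lemma Lrec (m n : ℕ) (hm : 1 ≤ m) :
    ∑ j ∈ range (m+1+1), (-1:ℚ)^(m+1+j) * centralt (m+1) j * genocchi (n+j)
    = (∑ j ∈ range (m+1), (-1:ℚ)^(m+j) * centralt m j * genocchi (n+1+j))
      + (m:ℚ)^2 * ∑ j ∈ range (m+1), (-1:ℚ)^(m+j) * centralt m j * genocchi (n+j) := by
  have hB : ∑ i ∈ range (m+1), (-1:ℚ)^(m+i) * centralt m (i+1) * genocchi (n+(i+1))
      = - ∑ j ∈ range (m+1), (-1:ℚ)^(m+j) * centralt m j * genocchi (n+j) := by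
    have h0 : ∑ j ∈ range (m+1+1), (-1:ℚ)^(m+j) * centralt m j * genocchi (n+j)
        = (∑ i ∈ range (m+1), (-1:ℚ)^(m+(i+1)) * centralt m (i+1) * genocchi (n+(i+1)))
          + (-1:ℚ)^(m+0) * centralt m 0 * genocchi (n+0) := Finset.sum_range_succ' _ _
    rw [Finset.sum_range_succ, centralt_eq_zero m (m+1) (by omega),
      centralt_zero_of_pos m hm] at h0
    simp only [mul_zero, zero_mul, add_zero] at h0
    simp only [neg_one_pow_shift1, neg_mul, Finset.sum_neg_distrib] at h0
    linarith [h0]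
  rw [Finset.sum_range_succ', centralt_succ_zero]
  simp only [mul_zero, zero_mul, add_zero]
  have step : ∑ i ∈ range (m+1), (-1:ℚ)^(m+1+(i+1)) * centralt (m+1) (i+1) * genocchi (n+(i+1))
      = (∑ i ∈ range (m+1), (-1:ℚ)^(m+i) * centralt m i * genocchi (n+1+i))
        - (m:ℚ)^2 * ∑ i ∈ range (m+1), (-1:ℚ)^(m+i) * centralt m (i+1) * genocchi (n+(i+1)) := by
    rw [Finset.mul_sum, ← Finset.sum_sub_distrib]
    refine Finset.sum_congr rfl fun i _ => ?_
    rw [centralt_succ_succ, neg_one_pow_shift2, show n+(i+1) = n+1+i from by omega]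
    ring
  rw [step, hB]
  ring

lemma Rrec (k n : ℕ) :
    ((k:ℚ)+2) * ∑ j ∈ range (n+1),
        (-1:ℚ)^(n+j) * centralT n j * (j.factorial : ℚ) * ((j+k+1).factorial : ℚ)
    = (∑ j ∈ range (n+1+1),
        (-1:ℚ)^(n+1+j) * centralT (n+1) j * (j.factorial : ℚ) * ((j+k).factorial : ℚ))
      + ((k:ℚ)+1)^2 * ∑ j ∈ range (n+1),
        (-1:ℚ)^(n+j) * centralT n j * (j.factorial : ℚ) * ((j+k).factorial : ℚ) := by
  have hS2 : ∑ i ∈ range (n+1), (-1:ℚ)^(n+i) * (((i:ℚ)+1)^2 * centralT n (i+1))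
        * ((i+1).factorial : ℚ) * ((i+1+k).factorial : ℚ)
      = - ∑ j ∈ range (n+1), (-1:ℚ)^(n+j) * ((j:ℚ)^2 * centralT n j)
        * (j.factorial : ℚ) * ((j+k).factorial : ℚ) := by
    have h0 : ∑ j ∈ range (n+1+1), (-1:ℚ)^(n+j) * ((j:ℚ)^2 * centralT n j)
          * (j.factorial : ℚ) * ((j+k).factorial : ℚ)
        = (∑ i ∈ range (n+1), (-1:ℚ)^(n+(i+1)) * (((i:ℚ)+1)^2 * centralT n (i+1))
            * ((i+1).factorial : ℚ) * ((i+1+k).factorial : ℚ))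
          + (-1:ℚ)^(n+0) * ((0:ℚ)^2 * centralT n 0)
            * ((0:ℕ).factorial : ℚ) * ((0+k).factorial : ℚ) := by
      rw [Finset.sum_range_succ']
      push_cast
      rfl
    rw [Finset.sum_range_succ, centralT_eq_zero n (n+1) (by omega)] at h0
    simp only [mul_zero, zero_mul, add_zero, zero_pow, ne_eq, OfNat.ofNat_ne_zero,
      not_false_iff, zero_mul, mul_zero] at h0
    simp only [neg_one_pow_shift1, neg_mul, Finset.sum_neg_distrib] at h0
    linarith [h0]
  have expand : ∑ j ∈ range (n+1+1),
        (-1:ℚ)^(n+1+j) * centralT (n+1) j * (j.factorial : ℚ) * ((j+k).factorial : ℚ)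
      = (∑ i ∈ range (n+1), (-1:ℚ)^(n+i) * centralT n i
          * ((i+1).factorial : ℚ) * ((i+1+k).factorial : ℚ))
        + ∑ i ∈ range (n+1), (-1:ℚ)^(n+i) * (((i:ℚ)+1)^2 * centralT n (i+1))
          * ((i+1).factorial : ℚ) * ((i+1+k).factorial : ℚ) := by
    rw [Finset.sum_range_succ', centralT_succ_zero, ← Finset.sum_add_distrib]
    simp only [mul_zero, zero_mul, add_zero]
    refine Finset.sum_congr rfl fun i _ => ?_
    rw [centralT_succ_succ, neg_one_pow_shift2]
    ring
  rw [expand, hS2, Finset.mul_sum, Finset.mul_sum, ← Finset.sum_neg_distrib,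
    ← Finset.sum_add_distrib, ← Finset.sum_add_distrib]
  refine Finset.sum_congr rfl fun j _ => ?_
  rw [show j+k+1 = (j+k)+1 from rfl, Nat.factorial_succ (j+k), Nat.factorial_succ j,
    show j+1+k = (j+k)+1 from by omega, Nat.factorial_succ (j+k)]
  push_cast
  ring

lemma prod_shift (l : ℕ) : ∏ i ∈ range l, ((1:ℚ) + i + 1) = ((l+1).factorial : ℚ) := by
  induction l with
  | zero => simp [Nat.factorial]
  | succ k ih =>
    rw [Finset.prod_range_succ, ih, Nat.factorial_succ (k+1)]
    push_cast
    ring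

lemma base_case (m : ℕ) (hm : 1 ≤ m) :
    ∑ j ∈ range (m+1), (-1:ℚ)^(m+j) * centralt m j * genocchi (1+j)
    = (m.factorial : ℚ) * ∑ j ∈ range (1+1),
        (-1:ℚ)^(1+j) * centralT 1 j * (j.factorial : ℚ) * ((j+m-1).factorial : ℚ) := by
  have lhs : ∑ j ∈ range (m+1), (-1:ℚ)^(m+j) * centralt m j * genocchi (1+j)
      = ∑ j ∈ range (m+1), (-1:ℚ)^(m+j) * centralt m j * gandhiF j 1 := by
    refine Finset.sum_congr rfl fun j _ => ?_
    rw [show 1+j = j+1 from by omega, genocchi_succ]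
  rw [lhs, Hsum m hm 1]
  obtain ⟨l, rfl⟩ : ∃ l, m = l + 1 := ⟨m-1, by omega⟩
  rw [show l+1-1 = l from rfl, prod_shift]
  rw [Finset.sum_range_succ, Finset.sum_range_succ, Finset.sum_range_zero]
  have h10 : centralT 1 0 = 0 := rfl
  have h11 : centralT 1 1 = 1 := by
    show centralT 0 0 + ((0:ℚ)+1)^2 * centralT 0 1 = 1
    show (1:ℚ) + ((0:ℚ)+1)^2 * 0 = 1
    ring
  rw [h10, h11]
  norm_num [show 1+(l+1)-1 = l+1 from by omega]

theorem genocchi_double_sum_identity (m n : ℕ) (hm : 1 ≤ m) (hn : 1 ≤ n) :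
    ∑ j ∈ Finset.range (m + 1), (-1) ^ (m + j) * centralt m j * genocchi (n + j) =
      (m.factorial : ℚ) *
        ∑ j ∈ Finset.range (n + 1),
          (-1) ^ (n + j) * centralT n j * (j.factorial : ℚ) *
            ((j + m - 1).factorial : ℚ) := by
  induction n, hn using Nat.le_induction generalizing m with
  | base => exact base_case m hm
  | succ n hn ih =>
    obtain ⟨k, rfl⟩ : ∃ k, m = k + 1 := ⟨m-1, by omega⟩
    have ih1 := ih (k+1) (by omega)
    have ih2 := ih (k+2) (by omega)
    -- rewrite natural subtractions
    have e1 : ∀ j : ℕ, j + (k+1) - 1 = j + k := fun j => by omega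
    have e2 : ∀ j : ℕ, j + (k+2) - 1 = j + k + 1 := fun j => by omega
    simp only [e1] at ih1 ⊢
    simp only [e2] at ih2
    have L := Lrec (k+1) n (by omega)
    rw [ih1, ih2] at L
    have R := Rrec k n
    have hfac : ((k+2).factorial : ℚ) = ((k:ℚ)+2) * ((k+1).factorial : ℚ) := by
      rw [Nat.factorial_succ]; push_cast; ring
    -- Goal: Lsum (k+1) (n+1) = (k+1)! * Qsum (k+1) (n+1)
    have goal_eq : ∑ j ∈ range (k+1+1), (-1:ℚ)^(k+1+j) * centralt (k+1) j * genocchi (n+1+j)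
        = ((k+1).factorial : ℚ) * ∑ j ∈ range (n+1+1),
            (-1:ℚ)^(n+1+j) * centralT (n+1) j * (j.factorial : ℚ) * ((j+k).factorial : ℚ) := by
      have : ∑ j ∈ range (k+1+1), (-1:ℚ)^(k+1+j) * centralt (k+1) j * genocchi (n+1+j)
          = ((k+2).factorial : ℚ) * (∑ j ∈ range (n+1),
              (-1:ℚ)^(n+j) * centralT n j * (j.factorial : ℚ) * ((j+k+1).factorial : ℚ))
            - ((k:ℚ)+1)^2 * (((k+1).factorial : ℚ) * ∑ j ∈ range (n+1),
              (-1:ℚ)^(n+j) * centralT n j * (j.factorial : ℚ) * ((j+k).factorial : ℚ)) := by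
        push_cast at L ⊢
        linarith [L]
      rw [this, hfac]
      linear_combination ((k+1).factorial : ℚ) * R
    exact goal_eq
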